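/- Suppose an inversion algorithm Invert satisfies: for all s ∈ ℤ_q^n and e ∈ ℤ_q^m with ‖e‖_∞ ≤ 2τ, Invert(A, As + e, t) = s. Then for any nonzero vector v ∈ ℤ_q^n, ‖Av‖_∞ > 4τ. -/
import Mathlib


/-- `|x| = min {x, q - x}` for `x ∈ ℤ_q`. -/
def zmodAbs (q : ℕ) (x : ZMod q) [NeZero q] : ℕ := min x.val (q - x.val)

/-- The infinity norm `‖w‖_∞ = max_i |w_i|` of a vector over `ℤ_q`. -/
def zmodNormInf {k q : ℕ} [NeZero q] (w : Fin k → ZMod q) : ℕ :=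
  Finset.univ.sup fun i => zmodAbs q (w i)

lemma zmodAbs_neg (q : ℕ) [NeZero q] (x : ZMod q) : zmodAbs q (-x) = zmodAbs q x := by
  unfold zmodAbs
  rcases eq_or_ne x 0 with h | h
  · simp [h]
  · rw [ZMod.neg_val, if_neg h]
    have hv : x.val < q := ZMod.val_lt x
    omega

lemma split_small (q τ : ℕ) [NeZero q] (x : ZMod q) (hx : x.val ≤ 4 * τ) :
    ∃ a b : ZMod q, x = a + b ∧ zmodAbs q a ≤ 2 * τ ∧ zmodAbs q b ≤ 2 * τ := by
  refine ⟨((x.val / 2 : ℕ) : ZMod q), ((x.val - x.val / 2 : ℕ) : ZMod q), ?_, ?_, ?_⟩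
  · rw [← Nat.cast_add]
    have : x.val / 2 + (x.val - x.val / 2) = x.val := by omega
    rw [this, ZMod.natCast_val, ZMod.cast_id]
  · have hlt : x.val / 2 < q := lt_of_le_of_lt (by omega) (ZMod.val_lt x)
    unfold zmodAbs
    rw [ZMod.val_cast_of_lt hlt]
    omega
  · have hlt : x.val - x.val / 2 < q := lt_of_le_of_lt (by omega) (ZMod.val_lt x)
    unfold zmodAbs
    rw [ZMod.val_cast_of_lt hlt]
    omega

lemma split_abs (q τ : ℕ) [NeZero q] (x : ZMod q) (hx : zmodAbs q x ≤ 4 * τ) :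
    ∃ a b : ZMod q, x = a + b ∧ zmodAbs q a ≤ 2 * τ ∧ zmodAbs q b ≤ 2 * τ := by
  unfold zmodAbs at hx
  rcases le_or_gt x.val (q - x.val) with h | h
  · exact split_small q τ x (by omega)
  · have hne : x ≠ 0 := by
      intro h0; rw [h0] at h; simp at h
    have hnv : (-x).val = q - x.val := by rw [ZMod.neg_val, if_neg hne]
    obtain ⟨a, b, hab, ha, hb⟩ := split_small q τ (-x) (by omega)
    refine ⟨-a, -b, ?_, ?_, ?_⟩
    · have : x = -(a + b) := by rw [← hab]; ring
      rw [this]; ring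
    · rw [zmodAbs_neg]; exact ha
    · rw [zmodAbs_neg]; exact hb

theorem invert_implies_far_from_kernel
    (m n q τ : ℕ) [NeZero q]
    {T : Type*} (t : T)
    (A : Matrix (Fin m) (Fin n) (ZMod q))
    (Invert : Matrix (Fin m) (Fin n) (ZMod q) → (Fin m → ZMod q) → T → (Fin n → ZMod q))
    (hInv : ∀ (s : Fin n → ZMod q) (e : Fin m → ZMod q),
      zmodNormInf e ≤ 2 * τ → Invert A (A.mulVec s + e) t = s) :
    ∀ v : Fin n → ZMod q, v ≠ 0 → 4 * τ < zmodNormInf (A.mulVec v) := by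
  intro v hv
  by_contra hle
  push_neg at hle
  have hcoord : ∀ i, zmodAbs q (A.mulVec v i) ≤ 4 * τ := fun i =>
    le_trans (Finset.le_sup (f := fun i => zmodAbs q (A.mulVec v i)) (Finset.mem_univ i)) hle
  choose a b hab ha hb using fun i => split_abs q τ (A.mulVec v i) (hcoord i)
  have h0 : Invert A (A.mulVec 0 + a) t = 0 := by
    apply hInv
    exact Finset.sup_le fun i _ => ha i
  have hvv : Invert A (A.mulVec v + (fun i => -b i)) t = v := by
    apply hInv
    apply Finset.sup_le
    intro i _
    rw [zmodAbs_neg]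
    exact hb i
  have heq : A.mulVec 0 + a = A.mulVec v + (fun i => -b i) := by
    funext i
    simp [Matrix.mulVec_zero, hab i]
  rw [heq, hvv] at h0
  exact hv h0
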